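/- arXiv:2204.14168 — 2 statements merged into one kernel-verified Lean document; each statement's English description precedes it below -/
import Mathlib

section
/- In a series-parallel dag with DePa labeling, for any two vertices u and v, if f(u) = f(v) then u and v are comparable: u ≼ v or v ≼ u. -/
/-- Series-parallel dag shapes: a single vertex, serial composition
(identifying the sink of `g1` with the source of `g2`), or parallel
composition (fresh source with edges to the sources of `g1`, `g2`, and a
fresh sink with edges from their sinks). -/
inductive SP : Type where
  | vert : SP
  | seq : SP → SP → SP
  | par : SP → SP → SP

/-- Non-source vertices of a series-parallel dag. -/
def NV : SP → Type
  | .vert => Empty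
  | .seq g1 g2 => NV g1 ⊕ NV g2
  | .par g1 g2 => ((Unit ⊕ NV g1) ⊕ (Unit ⊕ NV g2)) ⊕ Unit

/-- Vertices: the source, or a non-source vertex. -/
abbrev V (g : SP) : Type := Unit ⊕ NV g

/-- The (unique) source of a series-parallel dag. -/
def src (g : SP) : V g := Sum.inl ()

/-- Embedding of the first component of a serial composition. -/
def emb1 (g1 g2 : SP) : V g1 → V (.seq g1 g2)
  | .inl _ => Sum.inl ()
  | .inr n => Sum.inr (Sum.inl n)

/-- The (unique) sink of a series-parallel dag. -/
def snk : (g : SP) → V g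
  | .vert => Sum.inl ()
  | .seq g1 g2 =>
    match snk g2 with
    | .inl _ => emb1 g1 g2 (snk g1)
    | .inr n => Sum.inr (Sum.inr n)
  | .par _ _ => Sum.inr (Sum.inr ())

/-- Embedding of the second component of a serial composition:
the source of `g2` is identified with the sink of `g1`. -/
def emb2 (g1 g2 : SP) : V g2 → V (.seq g1 g2)
  | .inl _ => emb1 g1 g2 (snk g1)
  | .inr n => Sum.inr (Sum.inr n)

/-- Embedding of the left branch of a parallel composition. -/
def embL (g1 g2 : SP) (v : V g1) : V (.par g1 g2) := Sum.inr (Sum.inl (Sum.inl v))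

/-- Embedding of the right branch of a parallel composition. -/
def embR (g1 g2 : SP) (v : V g2) : V (.par g1 g2) := Sum.inr (Sum.inl (Sum.inr v))

/-- Edges of a series-parallel dag. -/
def Edge : (g : SP) → V g → V g → Prop
  | .vert, _, _ => False
  | .seq g1 g2, u, v =>
      (∃ a b, Edge g1 a b ∧ u = emb1 g1 g2 a ∧ v = emb1 g1 g2 b) ∨
      (∃ a b, Edge g2 a b ∧ u = emb2 g1 g2 a ∧ v = emb2 g1 g2 b)
  | .par g1 g2, u, v =>
      (∃ a b, Edge g1 a b ∧ u = embL g1 g2 a ∧ v = embL g1 g2 b) ∨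
      (∃ a b, Edge g2 a b ∧ u = embR g1 g2 a ∧ v = embR g1 g2 b) ∨
      (u = src (.par g1 g2) ∧ v = embL g1 g2 (src g1)) ∨
      (u = src (.par g1 g2) ∧ v = embR g1 g2 (src g2)) ∨
      (u = embL g1 g2 (snk g1) ∧ v = snk (.par g1 g2)) ∨
      (u = embR g1 g2 (snk g2) ∧ v = snk (.par g1 g2))

/-- `Reach g u v` (`u ≼ v`): there is a directed path (possibly empty) from `u` to `v`. -/
def Reach (g : SP) : V g → V g → Prop := Relation.ReflTransGen (Edge g)

/-- The dag-depth of a vertex (the length of a longest path ending at it),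
computed by the DePa rules: the source has depth 0; at a fork both children
have depth one greater; at a join the new vertex has depth
`1 + max` of the depths of the joining vertices. -/
def depth : (g : SP) → V g → ℕ
  | .vert, _ => 0
  | .seq _ _, .inl _ => 0
  | .seq g1 _, .inr (.inl n) => depth g1 (Sum.inr n)
  | .seq g1 g2, .inr (.inr n) => depth g1 (snk g1) + depth g2 (Sum.inr n)
  | .par _ _, .inl _ => 0
  | .par g1 _, .inr (.inl (.inl v)) => 1 + depth g1 v
  | .par _ g2, .inr (.inl (.inr v)) => 1 + depth g2 v
  | .par g1 g2, .inr (.inr _) => 1 + max (1 + depth g1 (snk g1)) (1 + depth g2 (snk g2))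

/-- The fork-path of a vertex, as a list of bits (`false` = L, `true` = R),
outermost fork first: the root has the empty path, a fork extends the path by
L and R for the two branches, and a join restores the common prefix. -/
def fpath : (g : SP) → V g → List Bool
  | .vert, _ => []
  | .seq _ _, .inl _ => []
  | .seq g1 _, .inr (.inl n) => fpath g1 (Sum.inr n)
  | .seq _ g2, .inr (.inr n) => fpath g2 (Sum.inr n)
  | .par _ _, .inl _ => []
  | .par g1 _, .inr (.inl (.inl v)) => false :: fpath g1 v
  | .par _ g2, .inr (.inl (.inr v)) => true :: fpath g2 v
  | .par _ _, .inr (.inr _) => []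

/-- Longest common prefix of two lists. -/
def lcp : List Bool → List Bool → List Bool
  | a :: as, b :: bs => if a = b then a :: lcp as bs else []
  | _, _ => []

/-!
Induct on the series-parallel decomposition. In a serial composition every vertex of the
first part reaches every vertex of the second, and fork-paths are inherited from the parts.
In a parallel composition the source and the sink are comparable with everything, while the
first symbol of a fork-path tells the two branches apart, so equal fork-paths put both
vertices in the same branch.
-/

lemma reach_emb1 (g1 g2 : SP) {a b : V g1} (h : Reach g1 a b) :
    Reach (.seq g1 g2) (emb1 g1 g2 a) (emb1 g1 g2 b) :=
  h.lift (p := Edge (.seq g1 g2)) (emb1 g1 g2) fun x y e => Or.inl ⟨x, y, e, rfl, rfl⟩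

lemma reach_emb2 (g1 g2 : SP) {a b : V g2} (h : Reach g2 a b) :
    Reach (.seq g1 g2) (emb2 g1 g2 a) (emb2 g1 g2 b) :=
  h.lift (p := Edge (.seq g1 g2)) (emb2 g1 g2) fun x y e => Or.inr ⟨x, y, e, rfl, rfl⟩

lemma reach_embL (g1 g2 : SP) {a b : V g1} (h : Reach g1 a b) :
    Reach (.par g1 g2) (embL g1 g2 a) (embL g1 g2 b) :=
  h.lift (p := Edge (.par g1 g2)) (embL g1 g2) fun x y e => Or.inl ⟨x, y, e, rfl, rfl⟩

lemma reach_embR (g1 g2 : SP) {a b : V g2} (h : Reach g2 a b) :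
    Reach (.par g1 g2) (embR g1 g2 a) (embR g1 g2 b) :=
  h.lift (p := Edge (.par g1 g2)) (embR g1 g2) fun x y e => Or.inr (Or.inl ⟨x, y, e, rfl, rfl⟩)

lemma snk_seq (g1 g2 : SP) : snk (.seq g1 g2) = emb2 g1 g2 (snk g2) := by
  rw [snk.eq_2]
  cases snk g2 <;> rfl

lemma eq_src_vert (v : V .vert) : v = src .vert := by
  rcases v with ⟨⟩ | e
  · rfl
  · exact (show Empty from e).elim

lemma src_reach (g : SP) (v : V g) : Reach g (src g) v := by
  induction g with
  | vert => exact eq_src_vert v ▸ .refl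
  | seq g1 g2 ih1 ih2 =>
    rcases v with ⟨⟩ | (n | n)
    · exact .refl
    · exact reach_emb1 g1 g2 (ih1 (.inr n))
    · exact (reach_emb1 g1 g2 (ih1 (snk g1))).trans (reach_emb2 g1 g2 (ih2 (.inr n)))
  | par g1 g2 ih1 ih2 =>
    have edgeL : Reach (.par g1 g2) (src _) (embL g1 g2 (src g1)) :=
      .single (Or.inr (Or.inr (Or.inl ⟨rfl, rfl⟩)))
    have edgeR : Reach (.par g1 g2) (src _) (embR g1 g2 (src g2)) :=
      .single (Or.inr (Or.inr (Or.inr (Or.inl ⟨rfl, rfl⟩))))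
    have joinL : Reach (.par g1 g2) (embL g1 g2 (snk g1)) (snk _) :=
      .single (Or.inr (Or.inr (Or.inr (Or.inr (Or.inl ⟨rfl, rfl⟩)))))
    rcases v with ⟨⟩ | ((a | b) | ⟨⟩)
    · exact .refl
    · exact edgeL.trans (reach_embL g1 g2 (ih1 a))
    · exact edgeR.trans (reach_embR g1 g2 (ih2 b))
    · exact (edgeL.trans (reach_embL g1 g2 (ih1 (snk g1)))).trans joinL

lemma reach_snk (g : SP) (v : V g) : Reach g v (snk g) := by
  induction g with
  | vert => exact eq_src_vert v ▸ .refl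
  | seq g1 g2 ih1 ih2 =>
    have reach_snk_emb2 (w : V g2) : Reach (.seq g1 g2) (emb2 g1 g2 w) (snk _) :=
      snk_seq g1 g2 ▸ reach_emb2 g1 g2 (ih2 w)
    rcases v with ⟨⟩ | (n | n)
    · exact (reach_emb1 g1 g2 (ih1 (src g1))).trans (reach_snk_emb2 (src g2))
    · exact (reach_emb1 g1 g2 (ih1 (.inr n))).trans (reach_snk_emb2 (src g2))
    · exact reach_snk_emb2 (.inr n)
  | par g1 g2 ih1 ih2 =>
    have joinL : Reach (.par g1 g2) (embL g1 g2 (snk g1)) (snk _) :=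
      .single (Or.inr (Or.inr (Or.inr (Or.inr (Or.inl ⟨rfl, rfl⟩)))))
    have joinR : Reach (.par g1 g2) (embR g1 g2 (snk g2)) (snk _) :=
      .single (Or.inr (Or.inr (Or.inr (Or.inr (Or.inr ⟨rfl, rfl⟩)))))
    rcases v with ⟨⟩ | ((a | b) | ⟨⟩)
    · exact (src_reach _ _).trans joinL
    · exact (reach_embL g1 g2 (ih1 a)).trans joinL
    · exact (reach_embR g1 g2 (ih2 b)).trans joinR
    · exact .refl

lemma reach_emb1_emb2 (g1 g2 : SP) (a : V g1) (b : V g2) :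
    Reach (.seq g1 g2) (emb1 g1 g2 a) (emb2 g1 g2 b) :=
  (reach_emb1 g1 g2 (reach_snk g1 a)).trans (reach_emb2 g1 g2 (src_reach g2 b))

/-- two vertices with equal fork-paths are comparable. -/
theorem comparable_of_fpath_eq (g : SP) (u v : V g)
    (h : fpath g u = fpath g v) :
    Reach g u v ∨ Reach g v u := by
  induction g with
  | vert => exact Or.inl (eq_src_vert u ▸ src_reach _ v)
  | seq g1 g2 ih1 ih2 =>
    rcases u with ⟨⟩ | (a | a)
    · exact Or.inl (src_reach _ v)
    · rcases v with ⟨⟩ | (b | b)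
      · exact Or.inr (src_reach _ _)
      · exact (ih1 (.inr a) (.inr b) h).imp (reach_emb1 g1 g2) (reach_emb1 g1 g2)
      · exact Or.inl (reach_emb1_emb2 g1 g2 (.inr a) (.inr b))
    · rcases v with ⟨⟩ | (b | b)
      · exact Or.inr (src_reach _ _)
      · exact Or.inr (reach_emb1_emb2 g1 g2 (.inr b) (.inr a))
      · exact (ih2 (.inr a) (.inr b) h).imp (reach_emb2 g1 g2) (reach_emb2 g1 g2)
  | par g1 g2 ih1 ih2 =>
    rcases u with ⟨⟩ | ((a | a) | ⟨⟩)
    · exact Or.inl (src_reach _ v)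
    · rcases v with ⟨⟩ | ((b | b) | ⟨⟩)
      · exact Or.inr (src_reach _ _)
      · exact (ih1 a b (List.cons.inj h).2).imp (reach_embL g1 g2) (reach_embL g1 g2)
      · simp [fpath] at h
      · exact Or.inl (reach_snk _ _)
    · rcases v with ⟨⟩ | ((b | b) | ⟨⟩)
      · exact Or.inr (src_reach _ _)
      · simp [fpath] at h
      · exact (ih2 a b (List.cons.inj h).2).imp (reach_embR g1 g2) (reach_embR g1 g2)
      · exact Or.inl (reach_snk _ _)
    · exact Or.inr (reach_snk _ v)
end

section
/- In a series-parallel dag with DePa labeling, if neither f(u) is a prefix of f(v) nor f(v) is a prefix of f(u), and it is not the case that d(u) ≤ d(c) ≤ d(v) or d(v) ≤ d(c) ≤ d(u) for the critical vertex c with f(c) = lcp(f(u), f(v)), then u and v are incomparable (logically concurrent). -/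
/-! ### Auxiliary lemmas -/

theorem prefix_antisymm' {a b : List Bool} (h1 : a <+: b) (h2 : b <+: a) : a = b :=
  h1.sublist.eq_of_length_le h2.length_le

theorem lcp_self : ∀ a : List Bool, lcp a a = a
  | [] => rfl
  | x :: xs => by simp [lcp, lcp_self xs]

theorem lcp_comm : ∀ a b : List Bool, lcp a b = lcp b a
  | [], [] => rfl
  | [], _ :: _ => rfl
  | _ :: _, [] => rfl
  | x :: xs, y :: ys => by
    by_cases h : x = y
    · subst h; simp [lcp, lcp_comm xs ys]
    · simp [lcp, h, Ne.symm h]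

theorem lcp_prefix_left : ∀ a b : List Bool, lcp a b <+: a
  | [], _ => by simp [lcp]
  | _ :: _, [] => by simp [lcp]
  | x :: xs, y :: ys => by
    by_cases h : x = y
    · simpa [lcp, h, List.cons_prefix_cons] using lcp_prefix_left xs ys
    · simp [lcp, h]

theorem lcp_prefix_right (a b : List Bool) : lcp a b <+: b := by
  rw [lcp_comm]; exact lcp_prefix_left b a

theorem prefix_lcp : ∀ (c a b : List Bool), c <+: a → c <+: b → c <+: lcp a b
  | [], _, _, _, _ => List.nil_prefix
  | x :: cs, [], _, h1, _ => absurd h1 (by simp)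
  | _ :: _, _ :: _, [], _, h2 => absurd h2 (by simp)
  | x :: cs, y :: as, z :: bs, h1, h2 => by
    rw [List.cons_prefix_cons] at h1 h2
    obtain ⟨rfl, h1⟩ := h1
    obtain ⟨rfl, h2⟩ := h2
    simpa [lcp, List.cons_prefix_cons] using prefix_lcp cs as bs h1 h2

theorem lcp_of_prefix {a b : List Bool} (h : a <+: b) : lcp a b = a :=
  prefix_antisymm' (lcp_prefix_left a b) (prefix_lcp a a b (List.prefix_refl a) h)

theorem prefix_concat_cases {p a : List Bool} {x : Bool} (h : p <+: a ++ [x]) :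
    p <+: a ∨ p = a ++ [x] := by
  obtain ⟨t, ht⟩ := h
  rcases t.eq_nil_or_concat with rfl | ⟨s, y, rfl⟩
  · right; simpa using ht
  · left
    rw [List.concat_eq_append, ← List.append_assoc] at ht
    have := List.append_inj' ht rfl
    exact ⟨s, this.1⟩

theorem lcp_concat {a c : List Bool} {x : Bool} (h : ¬ (a ++ [x] <+: c)) :
    lcp (a ++ [x]) c = lcp a c := by
  apply prefix_antisymm'
  · rcases prefix_concat_cases (lcp_prefix_left (a ++ [x]) c) with h1 | h1
    · exact prefix_lcp _ _ _ h1 (lcp_prefix_right (a ++ [x]) c)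
    · exact absurd (h1 ▸ lcp_prefix_right (a ++ [x]) c) h
  · exact prefix_lcp _ _ _ ((lcp_prefix_left a c).trans (a.prefix_append [x]))
      (lcp_prefix_right a c)

theorem fpath_src : ∀ g : SP, fpath g (Sum.inl ()) = []
  | .vert => rfl
  | .seq _ _ => rfl
  | .par _ _ => rfl

theorem depth_src : ∀ g : SP, depth g (Sum.inl ()) = 0
  | .vert => rfl
  | .seq _ _ => rfl
  | .par _ _ => rfl

theorem fpath_emb1 (g1 g2 : SP) : ∀ x : V g1, fpath (.seq g1 g2) (emb1 g1 g2 x) = fpath g1 x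
  | .inl () => (fpath_src g1).symm
  | .inr _ => rfl

theorem depth_emb1 (g1 g2 : SP) : ∀ x : V g1, depth (.seq g1 g2) (emb1 g1 g2 x) = depth g1 x
  | .inl () => (depth_src g1).symm
  | .inr _ => rfl

theorem fpath_snk : ∀ g : SP, fpath g (snk g) = []
  | .vert => rfl
  | .seq g1 g2 => by
    unfold snk
    split
    · rw [fpath_emb1]; exact fpath_snk g1
    · next n h =>
      show fpath g2 (Sum.inr n) = []
      rw [← h]; exact fpath_snk g2
  | .par _ _ => rfl

theorem fpath_emb2 (g1 g2 : SP) : ∀ x : V g2, fpath (.seq g1 g2) (emb2 g1 g2 x) = fpath g2 x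
  | .inl () => by
    show fpath (.seq g1 g2) (emb1 g1 g2 (snk g1)) = fpath g2 (Sum.inl ())
    rw [fpath_emb1, fpath_snk, fpath_src]
  | .inr _ => rfl

theorem depth_emb2 (g1 g2 : SP) :
    ∀ x : V g2, depth (.seq g1 g2) (emb2 g1 g2 x) = depth g1 (snk g1) + depth g2 x
  | .inl () => by
    show depth (.seq g1 g2) (emb1 g1 g2 (snk g1)) = depth g1 (snk g1) + depth g2 (Sum.inl ())
    rw [depth_emb1, depth_src]; omega
  | .inr _ => rfl

theorem edge_spec : ∀ (g : SP) (u v : V g), Edge g u v →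
    depth g u < depth g v ∧
      ((∃ b, fpath g v = fpath g u ++ [b]) ∨ (∃ b, fpath g u = fpath g v ++ [b]))
  | .vert, _, _, h => h.elim
  | .seq g1 g2, u, v, h => by
    rcases h with ⟨a, b, hab, rfl, rfl⟩ | ⟨a, b, hab, rfl, rfl⟩
    · obtain ⟨hd, hf⟩ := edge_spec g1 a b hab
      rw [depth_emb1, depth_emb1, fpath_emb1, fpath_emb1]
      exact ⟨hd, hf⟩
    · obtain ⟨hd, hf⟩ := edge_spec g2 a b hab
      rw [depth_emb2, depth_emb2, fpath_emb2, fpath_emb2]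
      exact ⟨by omega, hf⟩
  | .par g1 g2, u, v, h => by
    rcases h with ⟨a, b, hab, rfl, rfl⟩ | ⟨a, b, hab, rfl, rfl⟩ | ⟨rfl, rfl⟩ | ⟨rfl, rfl⟩ |
      ⟨rfl, rfl⟩ | ⟨rfl, rfl⟩
    · obtain ⟨hd, hf⟩ := edge_spec g1 a b hab
      constructor
      · show 1 + depth g1 a < 1 + depth g1 b; omega
      · show (∃ x, false :: fpath g1 b = (false :: fpath g1 a) ++ [x]) ∨
          (∃ x, false :: fpath g1 a = (false :: fpath g1 b) ++ [x])
        simpa using hf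
    · obtain ⟨hd, hf⟩ := edge_spec g2 a b hab
      constructor
      · show 1 + depth g2 a < 1 + depth g2 b; omega
      · show (∃ x, true :: fpath g2 b = (true :: fpath g2 a) ++ [x]) ∨
          (∃ x, true :: fpath g2 a = (true :: fpath g2 b) ++ [x])
        simpa using hf
    · constructor
      · show 0 < 1 + depth g1 (Sum.inl ()); omega
      · refine Or.inl ⟨false, ?_⟩
        show false :: fpath g1 (Sum.inl ()) = [] ++ [false]
        rw [fpath_src]; rfl
    · constructor
      · show 0 < 1 + depth g2 (Sum.inl ()); omega
      · refine Or.inl ⟨true, ?_⟩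
        show true :: fpath g2 (Sum.inl ()) = [] ++ [true]
        rw [fpath_src]; rfl
    · constructor
      · show 1 + depth g1 (snk g1) <
          1 + max (1 + depth g1 (snk g1)) (1 + depth g2 (snk g2))
        have := Nat.le_max_left (1 + depth g1 (snk g1)) (1 + depth g2 (snk g2))
        omega
      · refine Or.inr ⟨false, ?_⟩
        show false :: fpath g1 (snk g1) = [] ++ [false]
        rw [fpath_snk]; rfl
    · constructor
      · show 1 + depth g2 (snk g2) <
          1 + max (1 + depth g1 (snk g1)) (1 + depth g2 (snk g2))
        have := Nat.le_max_right (1 + depth g1 (snk g1)) (1 + depth g2 (snk g2))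
        omega
      · refine Or.inr ⟨true, ?_⟩
        show true :: fpath g2 (snk g2) = [] ++ [true]
        rw [fpath_snk]; rfl

theorem reach_depth_le (g : SP) {u v : V g} (h : Reach g u v) : depth g u ≤ depth g v := by
  induction h with
  | refl => exact le_refl _
  | tail _ e ih => exact le_trans ih (le_of_lt (edge_spec g _ _ e).1)

theorem reach_lcp_vertex (g : SP) {u v : V g} (h : Reach g u v) :
    ∃ c, Reach g u c ∧ Reach g c v ∧ fpath g c = lcp (fpath g u) (fpath g v) := by
  induction h using Relation.ReflTransGen.head_induction_on with
  | refl => exact ⟨v, .refl, .refl, (lcp_self _).symm⟩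
  | head e hr ih =>
    rename_i x w
    by_cases hp : fpath g x <+: fpath g v
    · exact ⟨x, .refl, .head e hr, (lcp_of_prefix hp).symm⟩
    · obtain ⟨c, h1, h2, h3⟩ := ih
      refine ⟨c, .head e h1, h2, ?_⟩
      rw [h3]
      rcases (edge_spec g x w e).2 with ⟨b, hb⟩ | ⟨b, hb⟩
      · rw [hb]
        refine lcp_concat fun hc => hp ?_
        exact ((fpath g x).prefix_append [b]).trans hc
      · rw [hb]
        exact (lcp_concat (by rw [← hb]; exact hp)).symm

/-- if neither fork-path is a prefix of the other, and the
critical vertex `c` (with `f(c) = lcp (f u) (f v)`, of maximal depth subject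
to `d(c) ≤ d(v)`, where `d(u) ≤ d(v)`) satisfies neither
`d(u) ≤ d(c) ≤ d(v)` nor `d(v) ≤ d(c) ≤ d(u)`, then `u` and `v` are
incomparable (logically concurrent). -/
theorem concurrent_of_critical (g : SP) (u v c : V g)
    (hd : depth g u ≤ depth g v)
    (hnp1 : ¬ (fpath g u <+: fpath g v))
    (hnp2 : ¬ (fpath g v <+: fpath g u))
    (hc : fpath g c = lcp (fpath g u) (fpath g v))
    (hcd : depth g c ≤ depth g v)
    (hmax : ∀ c' : V g, fpath g c' = lcp (fpath g u) (fpath g v) →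
      depth g c' ≤ depth g v → depth g c' ≤ depth g c)
    (hno1 : ¬ (depth g u ≤ depth g c ∧ depth g c ≤ depth g v))
    (hno2 : ¬ (depth g v ≤ depth g c ∧ depth g c ≤ depth g u)) :
    ¬ Reach g u v ∧ ¬ Reach g v u := by
  constructor
  · intro h
    obtain ⟨c', h1, h2, h3⟩ := reach_lcp_vertex g h
    have d1 : depth g u ≤ depth g c' := reach_depth_le g h1
    have d2 : depth g c' ≤ depth g v := reach_depth_le g h2
    have := hmax c' h3 d2
    omega
  · intro h
    obtain ⟨c', h1, h2, h3⟩ := reach_lcp_vertex g h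
    have d1 : depth g v ≤ depth g c' := reach_depth_le g h1
    have d2 : depth g c' ≤ depth g u := reach_depth_le g h2
    rw [lcp_comm] at h3
    have := hmax c' h3 (by omega)
    omega
end
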